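/- Fix k ≥ 1. Define E₀: A → A by E₀ = τ (the index-shift map) on A = ℂ[x₁, x₂, …]. Then E₀ restricts to a linear bijection from A onto B = ℂ[x₂, x₃, …], and E₀(I_{k,0}) = I'_{k,k}, where I_{k,0} = Σ_{t≥k+1} A·R⁰_{k,t} and I'_{k,k} = Σ_{t ≥ 2(k+1)} B·R¹_{k,t}. -/

import Mathlib

open MvPolynomial

noncomputable section

abbrev A : Type := MvPolynomial ℕ+ ℂ

/-- weight function: `x_m` has weight `m`. -/
def wtA : ℕ+ → ℕ := fun m => (m : ℕ)

/-- the index-shift map `τ : x_m ↦ x_{m+1}` (multiplicative on monomials). -/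
def tau : A →ₐ[ℂ] A := rename (fun m => m + 1)

/-- `B = ℂ[x₂, x₃, …]`, the subalgebra generated by the variables `x_m`, `m ≥ 2`. -/
def BB : Subalgebra ℂ A := Algebra.adjoin ℂ {p : A | ∃ m : ℕ+, 2 ≤ m ∧ p = X m}

/-- `R⁰_{k,t}`: sum over ordered `(k+1)`-tuples of integers `≥ 1` summing to `t`. -/
def R0 (k t : ℕ) : A :=
  ∑ m ∈ (Finset.Nat.antidiagonalTuple (k+1) t).filter (fun m => ∀ i, 1 ≤ m i),
    ∏ i, X ((m i).toPNat')

/-- `R¹_{k,t}`: sum over ordered `(k+1)`-tuples of integers `≥ 2` summing to `t`. -/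
def R1 (k t : ℕ) : A :=
  ∑ m ∈ (Finset.Nat.antidiagonalTuple (k+1) t).filter (fun m => ∀ i, 2 ≤ m i),
    ∏ i, X ((m i).toPNat')

/-- the projection `ρ : A → B` along `A·x₁` (set `x₁ = 0`). -/
def rho : A →ₐ[ℂ] A := aeval (fun m : ℕ+ => if m = 1 then 0 else X m)

/-- `I_{k,0} = Σ_{t ≥ k+1} A·R⁰_{k,t}`. -/
def Ik0 (k : ℕ) : Ideal A := Ideal.span {p : A | ∃ t, k + 1 ≤ t ∧ p = R0 k t}

/-- `I_{k,i} = Σ_{t ≥ k+1} A·R⁰_{k,t} + A·x₁^{k-i+1}`. -/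
def Ik (k i : ℕ) : Ideal A := Ik0 k ⊔ Ideal.span {X 1 ^ (k - i + 1)}

/-- `I'_{k,k} = Σ_{t ≥ 2(k+1)} B·R¹_{k,t}` as a ℂ-subspace of `A`. -/
def Ipkk (k : ℕ) : Submodule ℂ A :=
  Submodule.span ℂ {p : A | ∃ t, 2*(k+1) ≤ t ∧ ∃ b ∈ BB, p = b * R1 k t}

end

/-!
`τ` is the renaming along the injective shift `m ↦ m + 1` of `ℕ+`, whose range is `{m | 2 ≤ m}`;
hence `τ` is injective with image `B`. Adding one to every entry turns the `(k+1)`-tuples of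
integers `≥ 1` summing to `t` into those of integers `≥ 2` summing to `t + k + 1`, so
`τ(R⁰_{k,t}) = R¹_{k,t+k+1}`. Finally, the image of an ideal `A·S` under an algebra map `f` is
the `ℂ`-span of `range f · f(S)`, which for `f = τ` is `B · {R¹_{k,t} | t ≥ 2(k+1)}`.
-/

lemma tau_X (n : ℕ+) : tau (X n) = X (n + 1) := rename_X _ _

lemma tau_injective : Function.Injective tau :=
  rename_injective _ (add_left_injective 1)

lemma range_add_one_pnat : Set.range (· + 1 : ℕ+ → ℕ+) = {m | 2 ≤ m} := by
  ext m
  refine ⟨?_, fun hm => ⟨m - 1, PNat.sub_add_of_lt hm⟩⟩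
  rintro ⟨n, rfl⟩
  exact add_le_add_left (one_le (a := n)) 1

lemma range_tau : tau.range = BB := by
  rw [tau, rename_eq_aeval, ← Algebra.adjoin_range_eq_range_aeval, BB, Set.range_comp,
    range_add_one_pnat]
  congr 1
  ext p
  simp [eq_comm]

lemma toPNat'_add_one {m : ℕ} (hm : 1 ≤ m) : (m + 1).toPNat' = m.toPNat' + 1 :=
  PNat.coe_injective <| by rw [PNat.add_coe, PNat.toPNat'_coe (by omega), PNat.toPNat'_coe hm]; rfl

lemma sum_add_one {n : ℕ} (m : Fin n → ℕ) : ∑ i, (m + 1) i = ∑ i, m i + n := by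
  simp [Finset.sum_add_distrib]

lemma sub_one_add_one_of_forall_two_le {n : ℕ} {m : Fin n → ℕ} (hm : ∀ i, 2 ≤ m i) :
    m - 1 + 1 = m :=
  funext fun i => Nat.sub_add_cancel (one_le_two.trans (hm i))

lemma tau_R0 (k s : ℕ) : tau (R0 k s) = R1 k (s + (k + 1)) := by
  rw [R0, R1, map_sum]
  refine Finset.sum_nbij' (· + 1) (· - 1) ?_ ?_ ?_ ?_ ?_
  · intro m hm
    simp only [Finset.mem_filter, Finset.Nat.mem_antidiagonalTuple] at hm ⊢
    exact ⟨by rw [sum_add_one, hm.1], fun i => by simpa using hm.2 i⟩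
  · intro m hm
    simp only [Finset.mem_filter, Finset.Nat.mem_antidiagonalTuple] at hm ⊢
    refine ⟨?_, fun i => Nat.le_sub_one_of_lt (hm.2 i)⟩
    have := sum_add_one (m - 1)
    rw [sub_one_add_one_of_forall_two_le hm.2, hm.1] at this
    omega
  · intro m _
    simp
  · intro m hm
    exact sub_one_add_one_of_forall_two_le (Finset.mem_filter.mp hm).2
  · intro m hm
    simp only [map_prod, tau_X, Pi.add_apply, Pi.one_apply,
      toPNat'_add_one ((Finset.mem_filter.mp hm).2 _)]

open Pointwise

section ImageOfIdealSpan

variable {R S T : Type*} [CommSemiring R] [Semiring S] [Semiring T] [Algebra R S] [Algebra R T]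

lemma mul_mem_span_mul_of_mem {B : Subalgebra R T} {P : Set T} {y c : T}
    (hy : y ∈ Submodule.span R ((B : Set T) * P)) (hc : c ∈ B) :
    c * y ∈ Submodule.span R ((B : Set T) * P) := by
  have hmap := Submodule.mem_map_of_mem (f := LinearMap.mulLeft R c) hy
  rw [Submodule.map_span] at hmap
  refine Submodule.span_mono ?_ hmap
  rintro _ ⟨_, ⟨b, hb, p, hp, rfl⟩, rfl⟩
  exact ⟨c * b, mul_mem hc hb, p, hp, mul_assoc c b p⟩

theorem AlgHom.image_ideal_span (f : S →ₐ[R] T) (s : Set S) :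
    f '' (Ideal.span s : Set S) = Submodule.span R ((f.range : Set T) * f '' s) := by
  apply Set.Subset.antisymm
  · rintro _ ⟨x, hx, rfl⟩
    induction hx using Submodule.span_induction with
    | mem x hx =>
      exact Submodule.subset_span ⟨1, one_mem _, f x, ⟨x, hx, rfl⟩, one_mul _⟩
    | zero => simp
    | add x y _ _ hx hy => rw [map_add]; exact add_mem hx hy
    | smul a x _ hx => rw [smul_eq_mul, map_mul]; exact mul_mem_span_mul_of_mem hx ⟨a, rfl⟩
  · have hspan : Submodule.span R ((f.range : Set T) * f '' s) ≤
        ((Ideal.span s).restrictScalars R).map f.toLinearMap := by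
      rw [Submodule.span_le]
      rintro _ ⟨_, ⟨a, rfl⟩, _, ⟨x, hx, rfl⟩, rfl⟩
      exact ⟨a * x, Ideal.mul_mem_left _ a (Ideal.subset_span hx), map_mul f a x⟩
    exact hspan

end ImageOfIdealSpan

lemma image_tau_R0 (k : ℕ) :
    tau '' {p | ∃ t, k + 1 ≤ t ∧ p = R0 k t} = {p | ∃ t, 2 * (k + 1) ≤ t ∧ p = R1 k t} := by
  ext p
  constructor
  · rintro ⟨_, ⟨t, ht, rfl⟩, rfl⟩
    exact ⟨t + (k + 1), by omega, tau_R0 k t⟩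
  · rintro ⟨t, ht, rfl⟩
    refine ⟨R0 k (t - (k + 1)), ⟨t - (k + 1), by omega, rfl⟩, ?_⟩
    rw [tau_R0, Nat.sub_add_cancel (by omega)]

lemma Ipkk_eq_span_mul (k : ℕ) :
    Ipkk k = Submodule.span ℂ ((BB : Set A) * {p | ∃ t, 2 * (k + 1) ≤ t ∧ p = R1 k t}) := by
  rw [Ipkk]
  congr 1
  ext p
  constructor
  · rintro ⟨t, ht, b, hb, rfl⟩
    exact ⟨b, hb, R1 k t, ⟨t, ht, rfl⟩, rfl⟩
  · rintro ⟨b, hb, _, ⟨t, ht, rfl⟩, rfl⟩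
    exact ⟨t, ht, b, hb, rfl⟩

theorem stmt13_general (k : ℕ) :
    Function.Injective tau ∧ Set.range ⇑tau = (BB : Set A) ∧
    ⇑tau '' ((Ik0 k : Set A)) = (Ipkk k : Set A) := by
  refine ⟨tau_injective, by rw [← AlgHom.coe_range, range_tau], ?_⟩
  rw [Ik0, AlgHom.image_ideal_span, range_tau, image_tau_R0, Ipkk_eq_span_mul]

/-- `E₀ = τ` is a linear bijection from `A` onto `B`, and
`τ(I_{k,0}) = I'_{k,k}`. -/
theorem stmt13 (k : ℕ) (hk : 1 ≤ k) :
    Function.Injective tau ∧ Set.range ⇑tau = (BB : Set A) ∧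
    ⇑tau '' ((Ik0 k : Set A)) = (Ipkk k : Set A) :=
  stmt13_general k
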